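/- Let f : ℝⁿ → ℝⁿ be continuous with a pseudo-Jacobian map Jf, and suppose for some x ∈ ℝⁿ and β > 0 that α_{Jf}(x, β) := inf{//A// : A ∈ co(Jf(x + β𝐁ₙ))} > 0. Then ‖f(x + h) − f(x)‖ ≥ α_{Jf}(x, β)·‖h‖ for all h with ‖h‖ < β. -/

import Mathlib

/-! The mean value inclusion for pseudo-Jacobians places `f (x + h) - f x` in the closed convex
hull of the vectors `A h`, `A ∈ Jf y`, `y ∈ [x, x + h] ⊆ x + β𝐁ₙ`. Every point of that convex
hull is `B h` for some `B` in the convex hull of `Jf (x + β𝐁ₙ)`, so its norm is at least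
`//B// ‖h‖ ≥ α ‖h‖`, and this lower bound passes to the closure. The inclusion itself is proved
by testing against linear functionals: along the segment, the upper Dini derivative of `φ ∘ f`
is bounded by the supremum of `φ` on the hull, and the scalar mean value inequality for Dini
derivatives does the rest. -/

open Pointwise

noncomputable def conorm {n : ℕ}
    (A : EuclideanSpace ℝ (Fin n) →L[ℝ] EuclideanSpace ℝ (Fin n)) : ℝ :=
  sInf ((fun u => ‖A u‖) '' {u | ‖u‖ = 1})

noncomputable def regIndexBall {n : ℕ}
    (Jf : EuclideanSpace ℝ (Fin n) →
      Set (EuclideanSpace ℝ (Fin n) →L[ℝ] EuclideanSpace ℝ (Fin n)))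
    (x : EuclideanSpace ℝ (Fin n)) (β : ℝ) : ℝ :=
  sInf (conorm '' (convexHull ℝ (⋃ y ∈ Metric.ball x β, Jf y)))

/-- `J` is a pseudo-Jacobian of `f` at `x`: a nonempty closed set of linear maps such
that the upper Dini directional derivative of `v ∘ f` at `x` in direction `u` is at most
`sup_{M ∈ J} ⟨v, M u⟩`, for all `u`, `v`. -/
def IsPseudoJacobian {n m : ℕ}
    (f : EuclideanSpace ℝ (Fin n) → EuclideanSpace ℝ (Fin m))
    (J : Set (EuclideanSpace ℝ (Fin n) →L[ℝ] EuclideanSpace ℝ (Fin m)))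
    (x : EuclideanSpace ℝ (Fin n)) : Prop :=
  J.Nonempty ∧ IsClosed J ∧
    ∀ (u : EuclideanSpace ℝ (Fin n)) (v : EuclideanSpace ℝ (Fin m)),
      Filter.limsup
        (fun t : ℝ =>
          ((((inner ℝ v (f (x + t • u)) : ℝ) - (inner ℝ v (f x) : ℝ)) / t : ℝ) : EReal))
        (nhdsWithin 0 (Set.Ioi 0))
      ≤ ⨆ M ∈ J, ((inner ℝ v (M u) : ℝ) : EReal)

open Set Filter Topology

theorem mem_closure_convexHull_of_forall_le {E : Type*} [AddCommGroup E] [Module ℝ E]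
    [TopologicalSpace E] [IsTopologicalAddGroup E] [ContinuousSMul ℝ E] [LocallyConvexSpace ℝ E]
    {T : Set E} {p : E} (hp : ∀ (φ : StrongDual ℝ E) (c : ℝ), (∀ w ∈ T, φ w ≤ c) → φ p ≤ c) :
    p ∈ closure (convexHull ℝ T) := by
  by_contra hp'
  obtain ⟨φ, c, hφ, hc⟩ :=
    geometric_hahn_banach_closed_point (convex_convexHull ℝ T).closure isClosed_closure hp'
  have hφT : ∀ w ∈ T, φ w ≤ c := fun w hw =>
    (hφ w (subset_closure (subset_convexHull ℝ T hw))).le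
  exact (hp φ c hφT).not_gt hc

theorem sub_le_mul_sub_of_frequently_slope_lt {g : ℝ → ℝ} {a b c : ℝ} (hab : a ≤ b)
    (hg : ContinuousOn g (Icc a b))
    (hslope : ∀ t ∈ Ico a b, ∀ r, c < r → ∃ᶠ z in 𝓝[>] t, slope g t z < r) :
    g b - g a ≤ c * (b - a) := by
  have hB : ∀ t ∈ Ico a b, HasDerivWithinAt (fun s => g a + c * (s - a)) c (Ici t) t :=
    fun t _ => by
      simpa using (((hasDerivWithinAt_id t (Ici t)).sub_const a).const_mul c).const_add (g a)
  have := image_le_of_liminf_slope_right_le_deriv_boundary hg (by simp) (by fun_prop) hB hslope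
    (right_mem_Icc.2 hab)
  linarith

section PseudoJacobian

variable {n m : ℕ} {f : EuclideanSpace ℝ (Fin n) → EuclideanSpace ℝ (Fin m)}
  {J : Set (EuclideanSpace ℝ (Fin n) →L[ℝ] EuclideanSpace ℝ (Fin m))}
  {u : EuclideanSpace ℝ (Fin n)} {v : EuclideanSpace ℝ (Fin m)} {c r : ℝ}

theorem IsPseudoJacobian.eventually_div_lt {z : EuclideanSpace ℝ (Fin n)}
    (hJ : IsPseudoJacobian f J z) (hc : ∀ M ∈ J, inner ℝ v (M u) ≤ c) (hr : c < r) :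
    ∀ᶠ t in 𝓝[>] 0, (inner ℝ v (f (z + t • u)) - inner ℝ v (f z)) / t < r := by
  have hsup : (⨆ M ∈ J, ((inner ℝ v (M u) : ℝ) : EReal)) ≤ c :=
    iSup₂_le fun M hM => EReal.coe_le_coe_iff.2 (hc M hM)
  filter_upwards [eventually_lt_of_limsup_lt
    ((hJ.2.2 u v).trans_lt (hsup.trans_lt (EReal.coe_lt_coe_iff.2 hr)))] with t ht
  exact EReal.coe_lt_coe_iff.1 ht

theorem IsPseudoJacobian.eventually_slope_lt {x : EuclideanSpace ℝ (Fin n)} {t : ℝ}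
    (hJ : IsPseudoJacobian f J (x + t • u)) (hc : ∀ M ∈ J, inner ℝ v (M u) ≤ c) (hr : c < r) :
    ∀ᶠ s in 𝓝[>] t, slope (fun s => inner ℝ v (f (x + s • u))) t s < r := by
  rw [← add_zero t, ← map_add_left_nhdsGT, eventually_map]
  filter_upwards [hJ.eventually_div_lt hc hr] with s hs
  rwa [slope_def_field, add_zero, add_sub_cancel_left, add_smul, ← add_assoc]

theorem sub_mem_closure_convexHull_of_isPseudoJacobian {Jf : EuclideanSpace ℝ (Fin n) →
      Set (EuclideanSpace ℝ (Fin n) →L[ℝ] EuclideanSpace ℝ (Fin m))}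
    {x y : EuclideanSpace ℝ (Fin n)} (hf : ContinuousOn f (segment ℝ x y))
    (hJf : ∀ z ∈ segment ℝ x y, IsPseudoJacobian f (Jf z) z) :
    f y - f x ∈ closure (convexHull ℝ ((fun A => A (y - x)) '' ⋃ z ∈ segment ℝ x y, Jf z)) := by
  refine mem_closure_convexHull_of_forall_le fun φ c hc => ?_
  set v := (InnerProductSpace.toDual ℝ (EuclideanSpace ℝ (Fin m))).symm φ
  have hv : ∀ w, inner ℝ v w = φ w := fun w => InnerProductSpace.toDual_symm_apply
  set g : ℝ → ℝ := fun t => inner ℝ v (f (x + t • (y - x)))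
  have hline : MapsTo (fun t : ℝ => x + t • (y - x)) (Icc 0 1) (segment ℝ x y) := by
    rw [segment_eq_image']
    exact mapsTo_image _ _
  have hg : ContinuousOn g (Icc 0 1) := continuousOn_const.inner (hf.comp (by fun_prop) hline)
  have hslope : ∀ t ∈ Ico (0 : ℝ) 1, ∀ r, c < r → ∃ᶠ s in 𝓝[>] t, slope g t s < r := by
    intro t ht r hr
    have hz := hline (Ico_subset_Icc_self ht)
    refine ((hJf _ hz).eventually_slope_lt (fun M hM => ?_) hr).frequently
    rw [hv]
    exact hc _ ⟨M, mem_biUnion hz hM, rfl⟩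
  have := sub_le_mul_sub_of_frequently_slope_lt zero_le_one hg hslope
  simpa [g, hv] using this

end PseudoJacobian

section Conorm

variable {n : ℕ}

theorem conorm_nonneg (A : EuclideanSpace ℝ (Fin n) →L[ℝ] EuclideanSpace ℝ (Fin n)) :
    0 ≤ conorm A :=
  Real.sInf_nonneg (by rintro _ ⟨u, -, rfl⟩; positivity)

theorem conorm_mul_norm_le (A : EuclideanSpace ℝ (Fin n) →L[ℝ] EuclideanSpace ℝ (Fin n))
    (h : EuclideanSpace ℝ (Fin n)) : conorm A * ‖h‖ ≤ ‖A h‖ := by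
  rcases eq_or_ne h 0 with rfl | hh
  · simp
  have hpos : 0 < ‖h‖ := norm_pos_iff.2 hh
  have hunit : ‖‖h‖⁻¹ • h‖ = 1 := by
    rw [norm_smul, norm_inv, norm_norm, inv_mul_cancel₀ hpos.ne']
  have hle : conorm A ≤ ‖A (‖h‖⁻¹ • h)‖ :=
    csInf_le ⟨0, by rintro _ ⟨u, -, rfl⟩; positivity⟩ ⟨_, hunit, rfl⟩
  rw [map_smul, norm_smul, norm_inv, norm_norm] at hle
  rwa [le_inv_mul_iff₀ hpos, mul_comm] at hle

theorem regIndexBall_le_conorm {Jf : EuclideanSpace ℝ (Fin n) →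
      Set (EuclideanSpace ℝ (Fin n) →L[ℝ] EuclideanSpace ℝ (Fin n))}
    {x : EuclideanSpace ℝ (Fin n)} {β : ℝ}
    {A : EuclideanSpace ℝ (Fin n) →L[ℝ] EuclideanSpace ℝ (Fin n)}
    (hA : A ∈ convexHull ℝ (⋃ y ∈ Metric.ball x β, Jf y)) : regIndexBall Jf x β ≤ conorm A :=
  csInf_le ⟨0, by rintro _ ⟨B, -, rfl⟩; exact conorm_nonneg B⟩ ⟨A, hA, rfl⟩

end Conorm

theorem norm_sub_ge_of_regIndexBall_pos_general {n : ℕ}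
    (f : EuclideanSpace ℝ (Fin n) → EuclideanSpace ℝ (Fin n)) (hf : Continuous f)
    (Jf : EuclideanSpace ℝ (Fin n) →
      Set (EuclideanSpace ℝ (Fin n) →L[ℝ] EuclideanSpace ℝ (Fin n)))
    (hJf : ∀ y, IsPseudoJacobian f (Jf y) y)
    (x : EuclideanSpace ℝ (Fin n)) (β : ℝ) (hβ : 0 < β) :
    ∀ h : EuclideanSpace ℝ (Fin n), ‖h‖ < β →
      ‖f (x + h) - f x‖ ≥ regIndexBall Jf x β * ‖h‖ := by
  intro h hh
  have hseg : segment ℝ x (x + h) ⊆ Metric.ball x β :=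
    (convex_ball x β).segment_subset (Metric.mem_ball_self hβ) (by simpa using hh)
  have hmem := sub_mem_closure_convexHull_of_isPseudoJacobian (x := x) (y := x + h)
    hf.continuousOn fun z _ => hJf z
  rw [add_sub_cancel_left] at hmem
  refine closure_minimal ?_ (isClosed_le continuous_const continuous_norm) hmem
  rw [← IsLinearMap.image_convexHull ⟨fun _ _ => rfl, fun _ _ => rfl⟩]
  rintro _ ⟨A, hA, rfl⟩
  calc regIndexBall Jf x β * ‖h‖ ≤ conorm A * ‖h‖ := by
        gcongr
        exact regIndexBall_le_conorm (convexHull_mono (biUnion_subset_biUnion_left hseg) hA)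
    _ ≤ ‖A h‖ := conorm_mul_norm_le A h

theorem norm_sub_ge_of_regIndexBall_pos {n : ℕ}
    (f : EuclideanSpace ℝ (Fin n) → EuclideanSpace ℝ (Fin n)) (hf : Continuous f)
    (Jf : EuclideanSpace ℝ (Fin n) →
      Set (EuclideanSpace ℝ (Fin n) →L[ℝ] EuclideanSpace ℝ (Fin n)))
    (hJf : ∀ y, IsPseudoJacobian f (Jf y) y)
    (x : EuclideanSpace ℝ (Fin n)) (β : ℝ) (hβ : 0 < β)
    (hα : 0 < regIndexBall Jf x β) :
    ∀ h : EuclideanSpace ℝ (Fin n), ‖h‖ < β →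
      ‖f (x + h) - f x‖ ≥ regIndexBall Jf x β * ‖h‖ :=
  norm_sub_ge_of_regIndexBall_pos_general f hf Jf hJf x β hβ
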